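/- arXiv:1406.6181 — 3 statements merged into one kernel-verified Lean document; each statement's English description precedes it below -/
import Mathlib

section
/- Let J be an even measurable nonnegative kernel satisfying (J1), and Ω ⊂ ℝᴺ bounded open. Then 𝒟(Ω) = {u : ℝᴺ → ℝ measurable : 𝒥(u,u) < ∞, u ≡ 0 on ℝᴺ \ Ω}, equipped with the scalar product 𝒥, is a Hilbert space (i.e., it is complete). -/
/-!
Up to the factor `2⁻¹`, `u ↦ ((x, y) ↦ u x - u y)` is an isometry from `(𝒟(Ω), 𝒥)` into `L²` of
the measure `J (x - y) dx dy`. Hence a `𝒥`-Cauchy sequence has a subsequence whose differences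
`u_k x - u_k y` converge for almost every pair with `x - y ∈ {J > 0}`. This set has positive
measure because `∫ J = ∞`, so by Steinhaus' theorem `{J > 0} ∩ (w + {J > 0})` is non-null for all
small `w`; chaining through the connected space spreads convergence of the differences to almost
every pair. Fixing `x` outside the bounded set `Ω`, where every `u_k` vanishes, gives a.e.
convergence of `u_k` itself, and Fatou's lemma shows that the limit lies in `𝒟(Ω)` and is the
`𝒥`-limit of the sequence.
-/

open MeasureTheory ENNReal Set Filter

/-- The quadratic form `𝒥(u,u) = (1/2)∬ (u(x)-u(y))² J(x-y) dx dy`. -/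
noncomputable def Jquad (N : ℕ) (J : EuclideanSpace ℝ (Fin N) → ℝ)
    (u : EuclideanSpace ℝ (Fin N) → ℝ) : ℝ≥0∞ :=
  (1 / 2 : ℝ≥0∞) * ∫⁻ x, ∫⁻ y, ENNReal.ofReal ((u x - u y) ^ 2 * J (x - y))

/-- The form domain `𝒟(Ω)`. -/
def calD (N : ℕ) (J : EuclideanSpace ℝ (Fin N) → ℝ)
    (Ω : Set (EuclideanSpace ℝ (Fin N))) : Set (EuclideanSpace ℝ (Fin N) → ℝ) :=
  {u | Measurable u ∧ Jquad N J u < ⊤ ∧ ∀ x ∉ Ω, u x = 0}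

open scoped Pointwise Topology

theorem eventually_nhds_zero_measure_inter_vadd_pos {G : Type*} [MeasurableSpace G]
    [TopologicalSpace G] [BorelSpace G] [AddGroup G] [IsTopologicalAddGroup G]
    [LocallyCompactSpace G] (μ : Measure G) [μ.IsAddHaarMeasure] [μ.InnerRegular] {S : Set G}
    (hS : MeasurableSet S) (hSpos : 0 < μ S) :
    ∀ᶠ w in 𝓝 (0 : G), (0 : ℝ≥0∞) < μ (S ∩ (w +ᵥ S)) := by
  obtain ⟨K₀, hK₀S, hK₀, hK₀pos⟩ := hS.exists_lt_isCompact hSpos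
  set K := closure K₀
  have hKS : K ⊆ S := hK₀.closure_subset_measurableSet hS hK₀S
  have hKpos : 0 < μ K := by rwa [hK₀.measure_closure]
  filter_upwards [eventually_nhds_zero_measure_vadd_sdiff_lt hK₀.closure isClosed_closure
    hKpos.ne' (μ := μ)] with w hw
  have hcover : w +ᵥ K ⊆ ((w +ᵥ K) \ K) ∪ (K ∩ (w +ᵥ K)) := fun y hy => by
    by_cases hyK : y ∈ K
    · exact Or.inr ⟨hyK, hy⟩
    · exact Or.inl ⟨hy, hyK⟩
  have hpos : 0 < μ (K ∩ (w +ᵥ K)) := by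
    refine pos_iff_ne_zero.2 fun h0 => lt_irrefl (μ K) ?_
    calc μ K = μ (w +ᵥ K) := (measure_vadd μ w K).symm
      _ ≤ μ ((w +ᵥ K) \ K) + μ (K ∩ (w +ᵥ K)) :=
        (measure_mono hcover).trans (measure_union_le _ _)
      _ < μ K := by rwa [h0, add_zero]
  exact hpos.trans_le (measure_mono (inter_subset_inter hKS (vadd_set_mono hKS)))

theorem Dense.rel_of_forall_dist_lt {X : Type*} [PseudoMetricSpace X] [PreconnectedSpace X]
    {E : Set X} (hE : Dense E) {R : X → X → Prop} (htrans : ∀ x y z, R x y → R y z → R x z)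
    {δ : ℝ} (hδ : 0 < δ) (hnear : ∀ x ∈ E, ∀ y ∈ E, dist x y < δ → R x y)
    {x y : X} (hx : x ∈ E) (hy : y ∈ E) : R x y := by
  set A := ⋃ e ∈ {e | e ∈ E ∧ R x e}, Metric.ball e (δ / 2)
  have hA_closed : IsClosed A := by
    refine isClosed_of_closure_subset fun p hp => ?_
    obtain ⟨b, hbA, hpb⟩ := Metric.mem_closure_iff.1 hp (δ / 4) (by positivity)
    obtain ⟨e, ⟨heE, hxe⟩, hbe⟩ := mem_iUnion₂.1 hbA
    obtain ⟨e', hpe', he'E⟩ := Metric.dense_iff.1 hE p (δ / 4) (by positivity)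
    rw [Metric.mem_ball, dist_comm] at hpe'
    have hee' : dist e e' < δ := calc
      dist e e' ≤ dist e b + dist b p + dist p e' := dist_triangle4 _ _ _ _
      _ < δ / 2 + δ / 4 + δ / 4 := by
        gcongr
        · rw [dist_comm]; exact hbe
        · rw [dist_comm]; exact hpb
      _ = δ := by ring
    exact mem_iUnion₂.2 ⟨e', ⟨he'E, htrans _ _ _ hxe (hnear e heE e' he'E hee')⟩,
      by rw [Metric.mem_ball]; linarith⟩
  have hxA : x ∈ A := mem_iUnion₂.2
    ⟨x, ⟨hx, hnear x hx x hx (by rwa [dist_self])⟩, Metric.mem_ball_self (by positivity)⟩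
  have hA_univ : A = univ :=
    IsClopen.eq_univ ⟨hA_closed, isOpen_biUnion fun _ _ => Metric.isOpen_ball⟩ ⟨x, hxA⟩
  obtain ⟨e, ⟨heE, hxe⟩, hye⟩ := mem_iUnion₂.1 (hA_univ ▸ mem_univ y)
  exact htrans _ _ _ hxe (hnear e heE y hy (by rw [dist_comm]; linarith [Metric.mem_ball.1 hye]))

theorem ae_ae_rel_of_ae_ae_sub_mem_imp {G : Type*} [NormedAddCommGroup G] [PreconnectedSpace G]
    [MeasurableSpace G] [BorelSpace G] [LocallyCompactSpace G] (μ : Measure G)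
    [μ.IsAddHaarMeasure] [μ.InnerRegular] {S : Set G} (hS : MeasurableSet S) (hSpos : 0 < μ S)
    {R : G → G → Prop} (hsymm : ∀ x y, R x y → R y x) (htrans : ∀ x y z, R x y → R y z → R x z)
    (h : ∀ᵐ x ∂μ, ∀ᵐ y ∂μ, y - x ∈ S → R x y) : ∀ᵐ x ∂μ, ∀ᵐ y ∂μ, R x y := by
  obtain ⟨δ, hδ, hδS⟩ :=
    Metric.eventually_nhds_iff.1 (eventually_nhds_zero_measure_inter_vadd_pos μ hS hSpos)
  have hnear : ∀ x ∈ {x | ∀ᵐ y ∂μ, y - x ∈ S → R x y}, ∀ z ∈ {x | ∀ᵐ y ∂μ, y - x ∈ S → R x y},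
      dist x z < δ → R x z := by
    intro x (hx : ∀ᵐ y ∂μ, y - x ∈ S → R x y) z (hz : ∀ᵐ y ∂μ, y - z ∈ S → R z y) hxz
    have hset : x +ᵥ (S ∩ ((z - x) +ᵥ S)) = {y | y - x ∈ S ∧ y - z ∈ S} := by
      ext y
      simp only [mem_vadd_set_iff_neg_vadd_mem, mem_inter_iff, vadd_eq_add, neg_sub]
      rw [neg_add_eq_sub, show x - z + (y - x) = y - z by abel]
      rfl
    have hpos : μ {y | y - x ∈ S ∧ y - z ∈ S} ≠ 0 := by
      rw [← hset, measure_vadd]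
      exact (hδS (by rwa [dist_zero_right, ← dist_eq_norm, dist_comm])).ne'
    obtain ⟨y, ⟨hyx, hyz⟩, hxy, hzy⟩ :=
      Measure.exists_mem_of_measure_ne_zero_of_ae hpos (ae_restrict_of_ae (hx.and hz))
    exact htrans _ _ _ (hxy hyx) (hsymm _ _ (hzy hyz))
  filter_upwards [h] with x hx
  filter_upwards [h] with y hy
  exact (Measure.dense_of_ae h).rel_of_forall_dist_lt htrans hδ hnear hx hy

theorem measure_pos_setOf_pos_of_lintegral_eq_top {X : Type*} [MeasurableSpace X] {μ : Measure X}
    {f : X → ℝ} (hf : ∫⁻ x, ENNReal.ofReal (f x) ∂μ = ⊤) : 0 < μ {x | 0 < f x} := by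
  refine pos_iff_ne_zero.2 fun h0 => ?_
  have hzero : (fun x => ENNReal.ofReal (f x)) =ᵐ[μ] 0 := by
    filter_upwards [measure_eq_zero_iff_ae_notMem.1 h0] with x hx
    exact ENNReal.ofReal_eq_zero.2 (not_lt.1 hx)
  simp [lintegral_congr_ae hzero] at hf

theorem Bornology.IsBounded.measure_compl_eq_top {G : Type*} [PseudoMetricSpace G] [ProperSpace G]
    [AddGroup G] [IsTopologicalAddGroup G] [NoncompactSpace G] [MeasurableSpace G] [BorelSpace G]
    (μ : Measure G) [μ.IsAddHaarMeasure] {s : Set G} (hs : Bornology.IsBounded s) :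
    μ sᶜ = ⊤ := by
  by_contra h
  have : μ univ < ⊤ := calc
    μ univ ≤ μ s + μ sᶜ := measure_univ_le_add_compl s
    _ < ⊤ := ENNReal.add_lt_top.2 ⟨hs.measure_lt_top, lt_top_iff_ne_top.2 h⟩
  simp [measure_univ_of_isAddLeftInvariant] at this

theorem ae_exists_tendsto_of_ae_ae_cauchySeq_sub {X : Type*} [MeasurableSpace X] {μ : Measure X}
    {U : ℕ → X → ℝ} {s : Set X} (hs : μ s ≠ 0) (hzero : ∀ k, ∀ x ∈ s, U k x = 0)
    (h : ∀ᵐ x ∂μ, ∀ᵐ y ∂μ, CauchySeq fun k => U k x - U k y) :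
    ∀ᵐ y ∂μ, ∃ l, Tendsto (fun k => U k y) atTop (𝓝 l) := by
  obtain ⟨x₀, hx₀s, hx₀⟩ := Measure.exists_mem_of_measure_ne_zero_of_ae hs (ae_restrict_of_ae h)
  filter_upwards [hx₀] with y hy
  simp only [hzero _ x₀ hx₀s, zero_sub] at hy
  simpa [Pi.neg_def] using cauchySeq_tendsto_of_complete hy.neg

theorem eventually_forall_lt_of_forall_lt_ofReal {d : ℕ → ℕ → ℝ≥0∞}
    (h : ∀ ε > (0 : ℝ), ∃ M : ℕ, ∀ m ≥ M, ∀ n ≥ M, d m n < ENNReal.ofReal ε) {ε : ℝ≥0∞}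
    (hε : 0 < ε) : ∀ᶠ M in atTop, ∀ m ≥ M, ∀ n ≥ M, d m n < ε := by
  obtain ⟨r, -, hr0, hrε⟩ := ENNReal.lt_iff_exists_real_btwn.1 hε
  obtain ⟨M, hM⟩ := h r (ENNReal.ofReal_pos.1 hr0)
  exact eventually_atTop.2 ⟨M, fun M' hM' m hm n hn =>
    (hM m (hM'.trans hm) n (hM'.trans hn)).trans hrε⟩

def pairDiff {X : Type*} (u : X → ℝ) (q : X × X) : ℝ := u q.1 - u q.2

theorem pairDiff_sub {X : Type*} (f g : X → ℝ) : pairDiff (f - g) = pairDiff f - pairDiff g := by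
  ext q
  simp only [pairDiff, Pi.sub_apply]
  ring

theorem Measurable.pairDiff {X : Type*} [MeasurableSpace X] {u : X → ℝ} (hu : Measurable u) :
    Measurable (pairDiff u) :=
  (hu.comp measurable_fst).sub (hu.comp measurable_snd)

theorem eLpNorm_two_pow_two {X : Type*} [MeasurableSpace X] (μ : Measure X) (f : X → ℝ) :
    eLpNorm f 2 μ ^ 2 = ∫⁻ x, ENNReal.ofReal (f x ^ 2) ∂μ := by
  have h := eLpNorm_nnreal_pow_eq_lintegral (f := f) (μ := μ) (p := 2) two_ne_zero
  simp only [NNReal.coe_ofNat, ENNReal.coe_ofNat, ENNReal.rpow_ofNat] at h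
  rw [h]
  refine lintegral_congr fun x => ?_
  rw [Real.enorm_eq_ofReal_abs, ← ENNReal.ofReal_pow (abs_nonneg _), sq_abs]

section Energy

variable {N : ℕ} {J : EuclideanSpace ℝ (Fin N) → ℝ}

noncomputable def energyMeasure (J : EuclideanSpace ℝ (Fin N) → ℝ) :
    Measure (EuclideanSpace ℝ (Fin N) × EuclideanSpace ℝ (Fin N)) :=
  (volume.prod volume).withDensity fun q => ENNReal.ofReal (J (q.1 - q.2))

theorem measurable_energyDensity (hJ : Measurable J) :
    Measurable fun q : EuclideanSpace ℝ (Fin N) × EuclideanSpace ℝ (Fin N) =>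
      ENNReal.ofReal (J (q.1 - q.2)) :=
  ENNReal.measurable_ofReal.comp (hJ.comp (measurable_fst.sub measurable_snd))

theorem Jquad_eq_lintegral (hJ : Measurable J) {u : EuclideanSpace ℝ (Fin N) → ℝ}
    (hu : Measurable u) :
    Jquad N J u = 2⁻¹ * ∫⁻ q, ENNReal.ofReal (pairDiff u q ^ 2) ∂energyMeasure J := by
  have hsq : Measurable fun q => ENNReal.ofReal (pairDiff u q ^ 2) :=
    (hu.pairDiff.pow_const 2).ennreal_ofReal
  rw [energyMeasure, lintegral_withDensity_eq_lintegral_mul _ (measurable_energyDensity hJ) hsq,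
    lintegral_prod _ ((measurable_energyDensity hJ).mul hsq).aemeasurable, Jquad, one_div]
  congr 1
  refine lintegral_congr fun x => lintegral_congr fun y => ?_
  simp only [Pi.mul_apply, pairDiff]
  rw [ENNReal.ofReal_mul (sq_nonneg _), mul_comm]

theorem Jquad_eq_eLpNorm (hJ : Measurable J) {u : EuclideanSpace ℝ (Fin N) → ℝ}
    (hu : Measurable u) : Jquad N J u = 2⁻¹ * eLpNorm (pairDiff u) 2 (energyMeasure J) ^ 2 := by
  rw [Jquad_eq_lintegral hJ hu, eLpNorm_two_pow_two]

theorem Jquad_lt_top_iff (hJ : Measurable J) {u : EuclideanSpace ℝ (Fin N) → ℝ}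
    (hu : Measurable u) :
    Jquad N J u < ⊤ ↔ eLpNorm (pairDiff u) 2 (energyMeasure J) < ⊤ := by
  simp [Jquad_eq_eLpNorm hJ hu, lt_top_iff_ne_top, ENNReal.mul_eq_top]

theorem Jquad_sub_lt_top (hJ : Measurable J) {f g : EuclideanSpace ℝ (Fin N) → ℝ}
    (hf : Measurable f) (hg : Measurable g) (hft : Jquad N J f < ⊤) (hgt : Jquad N J g < ⊤) :
    Jquad N J (f - g) < ⊤ := by
  rw [Jquad_lt_top_iff hJ (hf.sub hg), pairDiff_sub]
  rw [Jquad_lt_top_iff hJ hf] at hft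
  rw [Jquad_lt_top_iff hJ hg] at hgt
  exact (eLpNorm_sub_le hf.pairDiff.aestronglyMeasurable hg.pairDiff.aestronglyMeasurable
    one_le_two).trans_lt (ENNReal.add_lt_top.2 ⟨hft, hgt⟩)

theorem eLpNorm_pairDiff_lt_of_Jquad_lt (hJ : Measurable J) {u : EuclideanSpace ℝ (Fin N) → ℝ}
    (hu : Measurable u) {b : ℝ≥0∞} (h : Jquad N J u < 2⁻¹ * b ^ 2) :
    eLpNorm (pairDiff u) 2 (energyMeasure J) < b := by
  rw [Jquad_eq_eLpNorm hJ hu, (ENNReal.mul_right_strictMono (by simp) (by simp)).lt_iff_lt] at h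
  exact (ENNReal.pow_lt_pow_left_iff two_ne_zero).1 h

theorem ae_energyMeasure_of_ae {P : EuclideanSpace ℝ (Fin N) → Prop} (h : ∀ᵐ x, P x) :
    ∀ᵐ q ∂energyMeasure J, P q.1 ∧ P q.2 :=
  (withDensity_absolutelyContinuous _ _).ae_le
    ((Measure.quasiMeasurePreserving_fst.ae h).and (Measure.quasiMeasurePreserving_snd.ae h))

theorem Jquad_le_liminf (hJ : Measurable J) {f : ℕ → EuclideanSpace ℝ (Fin N) → ℝ}
    (hf : ∀ k, Measurable (f k)) {g : EuclideanSpace ℝ (Fin N) → ℝ} (hg : Measurable g)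
    (hlim : ∀ᵐ x, Tendsto (fun k => f k x) atTop (𝓝 (g x))) :
    Jquad N J g ≤ liminf (fun k => Jquad N J (f k)) atTop := by
  have hpair : ∀ᵐ q ∂energyMeasure J, Tendsto (fun k => ENNReal.ofReal (pairDiff (f k) q ^ 2))
      atTop (𝓝 (ENNReal.ofReal (pairDiff g q ^ 2))) := by
    filter_upwards [ae_energyMeasure_of_ae hlim] with q hq
    exact ENNReal.tendsto_ofReal ((hq.1.sub hq.2).pow 2)
  simp_rw [Jquad_eq_lintegral hJ (hf _), Jquad_eq_lintegral hJ hg,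
    ENNReal.liminf_const_mul_of_ne_top (by simp : (2⁻¹ : ℝ≥0∞) ≠ ⊤)]
  gcongr
  calc ∫⁻ q, ENNReal.ofReal (pairDiff g q ^ 2) ∂energyMeasure J
      = ∫⁻ q, liminf (fun k => ENNReal.ofReal (pairDiff (f k) q ^ 2)) atTop ∂energyMeasure J :=
        lintegral_congr_ae (hpair.mono fun q hq => hq.liminf_eq.symm)
    _ ≤ _ := lintegral_liminf_le fun k => ((hf k).pairDiff.pow_const 2).ennreal_ofReal

theorem eventually_Jquad_sub_le_of_tendsto (hJ : Measurable J)
    {u : ℕ → EuclideanSpace ℝ (Fin N) → ℝ} (hu : ∀ n, Measurable (u n)) {φ : ℕ → ℕ}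
    (hφ : Tendsto φ atTop atTop) {v : EuclideanSpace ℝ (Fin N) → ℝ} (hv : Measurable v)
    (hlim : ∀ᵐ y, Tendsto (fun k => u (φ k) y) atTop (𝓝 (v y))) {ε : ℝ≥0∞}
    (hε : ∀ᶠ M in atTop, ∀ m ≥ M, ∀ n ≥ M, Jquad N J (u m - u n) < ε) :
    ∀ᶠ n in atTop, Jquad N J (u n - v) ≤ ε := by
  obtain ⟨M, hM⟩ := eventually_atTop.1 hε
  refine eventually_atTop.2 ⟨M, fun n hn => ?_⟩
  refine (Jquad_le_liminf hJ (fun k => (hu n).sub (hu _)) ((hu n).sub hv)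
    (hlim.mono fun y hy => tendsto_const_nhds.sub hy)).trans ?_
  exact liminf_le_of_frequently_le'
    ((hφ.eventually_ge_atTop M).mono fun k hk => (hM M le_rfl n hn _ hk).le).frequently

theorem pos_of_lintegral_eq_top (h : ∫⁻ z, ENNReal.ofReal (J z) = ⊤) : 0 < N := by
  refine Nat.pos_of_ne_zero ?_
  rintro rfl
  rw [lintegral_unique] at h
  simp [ENNReal.mul_eq_top, measure_ne_top] at h

theorem ae_ae_sub_mem_imp_of_ae_energyMeasure (hJ : Measurable J) (hJeven : ∀ z, J (-z) = J z)
    {P : EuclideanSpace ℝ (Fin N) → EuclideanSpace ℝ (Fin N) → Prop}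
    (h : ∀ᵐ q ∂energyMeasure J, P q.1 q.2) : ∀ᵐ x, ∀ᵐ y, y - x ∈ {z | 0 < J z} → P x y := by
  rw [energyMeasure, ae_withDensity_iff (measurable_energyDensity hJ)] at h
  filter_upwards [Measure.ae_ae_of_ae_prod h] with x hx
  filter_upwards [hx] with y hy hJxy
  refine hy ?_
  rw [ne_eq, ENNReal.ofReal_eq_zero, not_le, ← neg_sub, hJeven]
  exact hJxy

theorem ae_ae_cauchySeq_sub_of_Jquad_sub_lt (hJ : Measurable J) (hJeven : ∀ z, J (-z) = J z)
    (hJinf : ∫⁻ z, ENNReal.ofReal (J z) = ⊤) {U : ℕ → EuclideanSpace ℝ (Fin N) → ℝ}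
    (hU : ∀ k, Measurable (U k))
    (hcau : ∀ K m n, K ≤ m → K ≤ n → Jquad N J (U m - U n) < 2⁻¹ * (2⁻¹ ^ K) ^ 2) :
    ∀ᵐ x, ∀ᵐ y, CauchySeq fun k => U k x - U k y := by
  have hpairs : ∀ᵐ q ∂energyMeasure J, ∃ l, Tendsto (fun k => pairDiff (U k) q) atTop (𝓝 l) :=
    Lp.ae_tendsto_of_cauchy_eLpNorm (fun k => (hU k).pairDiff.aestronglyMeasurable) one_le_two
      (B := fun k => 2⁻¹ ^ k) (by simp) fun K m n hm hn => by
        rw [← pairDiff_sub]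
        exact eLpNorm_pairDiff_lt_of_Jquad_lt hJ ((hU m).sub (hU n)) (hcau K m n hm hn)
  refine ae_ae_rel_of_ae_ae_sub_mem_imp volume (measurableSet_lt measurable_const hJ)
    (measure_pos_setOf_pos_of_lintegral_eq_top hJinf)
    (R := fun x y => CauchySeq fun k => U k x - U k y)
    (fun x y h => by simpa only [Pi.neg_def, neg_sub] using h.neg)
    (fun x y z h₁ h₂ => by simpa only [Pi.add_def, sub_add_sub_cancel] using h₁.add h₂) ?_
  exact ae_ae_sub_mem_imp_of_ae_energyMeasure hJ hJeven
    (P := fun x y => CauchySeq fun k => U k x - U k y) (hpairs.mono fun q ⟨l, hl⟩ => hl.cauchySeq)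

end Energy

theorem calD_complete_general
    (N : ℕ) (J : EuclideanSpace ℝ (Fin N) → ℝ)
    (hJmeas : Measurable J)
    (hJeven : ∀ z, J (-z) = J z)
    (hJinf : ∫⁻ z, ENNReal.ofReal (J z) = ⊤)
    (Ω : Set (EuclideanSpace ℝ (Fin N)))
    (hΩb : Bornology.IsBounded Ω)
    (u : ℕ → EuclideanSpace ℝ (Fin N) → ℝ)
    (hu : ∀ n, u n ∈ calD N J Ω)
    (hCauchy : ∀ ε > (0 : ℝ), ∃ M : ℕ, ∀ m ≥ M, ∀ n ≥ M,
      Jquad N J (u m - u n) < ENNReal.ofReal ε) :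
    ∃ v ∈ calD N J Ω,
      Tendsto (fun n => Jquad N J (u n - v)) atTop (nhds 0) := by
  have hum : ∀ n, Measurable (u n) := fun n => (hu n).1
  have hCauchy' : ∀ ε : ℝ≥0∞, 0 < ε → ∀ᶠ M in atTop, ∀ m ≥ M, ∀ n ≥ M,
      Jquad N J (u m - u n) < ε := fun ε hε => eventually_forall_lt_of_forall_lt_ofReal hCauchy hε
  obtain ⟨φ, hφ, hφCauchy⟩ : ∃ φ : ℕ → ℕ, StrictMono φ ∧ ∀ k, ∀ m ≥ φ k, ∀ n ≥ φ k,
      Jquad N J (u m - u n) < 2⁻¹ * (2⁻¹ ^ k) ^ 2 :=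
    extraction_forall_of_eventually fun k => hCauchy' _ (ENNReal.mul_pos (by simp) (by simp))
  -- makes `EuclideanSpace ℝ (Fin N)` noncompact, so the complement of the bounded `Ω` is not null
  have : Nonempty (Fin N) := ⟨⟨0, pos_of_lintegral_eq_top hJinf⟩⟩
  have hconv : ∀ᵐ y, ∃ l, Tendsto (fun k => u (φ k) y) atTop (𝓝 l) :=
    ae_exists_tendsto_of_ae_ae_cauchySeq_sub (s := Ωᶜ) (by simp [hΩb.measure_compl_eq_top volume])
      (fun k x hx => (hu (φ k)).2.2 x hx)
      (ae_ae_cauchySeq_sub_of_Jquad_sub_lt hJmeas hJeven hJinf (fun k => hum (φ k))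
        fun K m n hm hn => hφCauchy K _ (hφ.monotone hm) _ (hφ.monotone hn))
  -- junk on the null set where `u (φ k) y` diverges
  set v := fun y => limUnder atTop fun k => u (φ k) y
  have hv_meas : Measurable v :=
    (StronglyMeasurable.limUnder fun k => (hum (φ k)).stronglyMeasurable).measurable
  have hv_zero : ∀ y ∉ Ω, v y = 0 := fun y hy => by
    simp only [v, (hu _).2.2 y hy]
    exact tendsto_const_nhds.limUnder_eq
  have henergy : ∀ ε > 0, ∀ᶠ n in atTop, Jquad N J (u n - v) ≤ ε := fun ε hε =>
    eventually_Jquad_sub_le_of_tendsto hJmeas hum hφ.tendsto_atTop hv_meas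
      (hconv.mono fun y hy => tendsto_nhds_limUnder hy) (hCauchy' ε hε)
  obtain ⟨M, hM⟩ := eventually_atTop.1 (henergy 1 one_pos)
  have hv_fin : Jquad N J v < ⊤ := by
    simpa using Jquad_sub_lt_top hJmeas (hum M) ((hum M).sub hv_meas) (hu M).2.1
      ((hM M le_rfl).trans_lt ENNReal.one_lt_top)
  exact ⟨v, ⟨hv_meas, hv_fin, hv_zero⟩, ENNReal.tendsto_nhds_zero.2 henergy⟩

/-- Completeness of `𝒟(Ω)` with respect to the scalar product `𝒥`: every
`𝒥`-Cauchy sequence in `𝒟(Ω)` converges in the `𝒥`-energy to some element of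
`𝒟(Ω)`. -/
theorem calD_complete
    (N : ℕ) (J : EuclideanSpace ℝ (Fin N) → ℝ)
    (hJmeas : Measurable J) (hJnonneg : ∀ z, 0 ≤ J z)
    (hJeven : ∀ z, J (-z) = J z)
    (hJ1a : ∫⁻ z in {z | 1 ≤ ‖z‖}, ENNReal.ofReal (J z) < ⊤)
    (hJ1b : ∫⁻ z in {z | ‖z‖ ≤ 1}, ENNReal.ofReal (‖z‖ ^ 2 * J z) < ⊤)
    (hJinf : ∫⁻ z, ENNReal.ofReal (J z) = ⊤)
    (Ω : Set (EuclideanSpace ℝ (Fin N)))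
    (hΩo : IsOpen Ω) (hΩb : Bornology.IsBounded Ω)
    (u : ℕ → EuclideanSpace ℝ (Fin N) → ℝ)
    (hu : ∀ n, u n ∈ calD N J Ω)
    (hCauchy : ∀ ε > (0 : ℝ), ∃ M : ℕ, ∀ m ≥ M, ∀ n ≥ M,
      Jquad N J (u m - u n) < ENNReal.ofReal ε) :
    ∃ v ∈ calD N J Ω,
      Tendsto (fun n => Jquad N J (u n - v)) atTop (nhds 0) :=
  calD_complete_general N J hJmeas hJeven hJinf Ω hΩb u hu hCauchy
end

section
/- Let J be an even nonnegative kernel satisfying (J1), Ω ⊂ ℝᴺ bounded open, v ∈ C²_c(ℝᴺ), and u ∈ 𝒟(Ω) ∩ L²(Ω). Then 𝒥(u,v) = ∫_{ℝᴺ} u(x) [Iv](x) dx, where [Iv](x) is the principal value integral lim_{ε→0} ∫_{|x−y|≥ε} (v(x)−v(y)) J(x−y) dy. -/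
/-!
Truncating the kernel to `{ε ≤ ‖z‖}` makes it integrable, and for the truncated kernel the identity
`𝒥_ε(u, v) = ∫ u · I_ε v` is Fubini together with the symmetry `(x, y) ↦ (y, x)`. As `ε → 0` the
left side tends to `𝒥(u, v)` by dominated convergence, since `(u x - u y) (v x - v y) J (x - y)` is
integrable: by `|a b| ≤ a ^ 2 + b ^ 2` it is dominated by the integrands of `𝒥(u, u)` and
`𝒥(v, v)`, both finite. On the right, because `J` is even, the first-order Taylor term of `v` on
the unit ball can be subtracted without changing `I_ε v`; the remainder is `O(min (‖z‖ ^ 2) 1)`,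
so by (J1) `I_ε v` is bounded uniformly in `ε` and `x` and converges pointwise to `Iv`. As
`u ∈ L¹` (`Ω` is bounded and `u ∈ L²`), dominated convergence applies again.
-/

open MeasureTheory ENNReal Set Filter

noncomputable def Jbil (N : ℕ) (J : EuclideanSpace ℝ (Fin N) → ℝ)
    (u v : EuclideanSpace ℝ (Fin N) → ℝ) : ℝ :=
  (1 / 2 : ℝ) * ∫ x, ∫ y, (u x - u y) * (v x - v y) * J (x - y)

noncomputable def Iop (N : ℕ) (J : EuclideanSpace ℝ (Fin N) → ℝ)
    (v : EuclideanSpace ℝ (Fin N) → ℝ) (x : EuclideanSpace ℝ (Fin N)) : ℝ :=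
  limUnder (nhdsWithin 0 (Set.Ioi 0))
    (fun ε => ∫ y in {y | ε ≤ ‖x - y‖}, (v x - v y) * J (x - y))

open Topology

section LevyKernel

variable {E : Type*} [NormedAddCommGroup E] [MeasurableSpace E]

structure IsLevyKernel (μ : Measure E) (J : E → ℝ) : Prop where
  measurable : Measurable J
  nonneg : ∀ z, 0 ≤ J z
  even : ∀ z, J (-z) = J z
  integrableOn_sq_mul : IntegrableOn (fun z => ‖z‖ ^ 2 * J z) {z | ‖z‖ ≤ 1} μ
  integrableOn_one_le : IntegrableOn J {z | 1 ≤ ‖z‖} μ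

namespace IsLevyKernel

variable {μ : Measure E} {J : E → ℝ}

theorem of_lintegral_lt_top [OpensMeasurableSpace E] (hJm : Measurable J) (hJ0 : ∀ z, 0 ≤ J z)
    (hJeven : ∀ z, J (-z) = J z)
    (hnear : ∫⁻ z in {z | ‖z‖ ≤ 1}, ENNReal.ofReal (‖z‖ ^ 2 * J z) ∂μ < ⊤)
    (htail : ∫⁻ z in {z | 1 ≤ ‖z‖}, ENNReal.ofReal (J z) ∂μ < ⊤) : IsLevyKernel μ J where
  measurable := hJm
  nonneg := hJ0
  even := hJeven
  integrableOn_sq_mul := ⟨by fun_prop,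
    (hasFiniteIntegral_iff_ofReal (ae_of_all _ fun z => by have := hJ0 z; positivity)).2 hnear⟩
  integrableOn_one_le :=
    ⟨hJm.aestronglyMeasurable, (hasFiniteIntegral_iff_ofReal (ae_of_all _ hJ0)).2 htail⟩

theorem integrable_min_sq_one_mul [OpensMeasurableSpace E] (hJ : IsLevyKernel μ J) :
    Integrable (fun z => min (‖z‖ ^ 2) 1 * J z) μ := by
  have hnear : IntegrableOn (fun z => min (‖z‖ ^ 2) 1 * J z) {z | ‖z‖ ≤ 1} μ := by
    refine hJ.integrableOn_sq_mul.congr_fun (fun z hz => ?_)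
      (measurableSet_le (by fun_prop) (by fun_prop))
    rw [min_eq_left (pow_le_one₀ (norm_nonneg z) hz)]
  have htail : IntegrableOn (fun z => min (‖z‖ ^ 2) 1 * J z) {z | ‖z‖ ≤ 1}ᶜ μ := by
    have hsub : {z : E | ‖z‖ ≤ 1}ᶜ ⊆ {z | 1 ≤ ‖z‖} := fun z hz =>
      le_of_lt (not_le.1 (show ¬ ‖z‖ ≤ 1 from hz))
    refine (hJ.integrableOn_one_le.mono_set hsub).congr_fun (fun z hz => ?_)
      (measurableSet_le (by fun_prop) (by fun_prop)).compl
    rw [min_eq_right (one_le_pow₀ (hsub hz)), one_mul]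
  simpa using hnear.union htail

theorem integrable_mul_of_abs_le [OpensMeasurableSpace E] (hJ : IsLevyKernel μ J) {f : E → ℝ}
    (hf : AEStronglyMeasurable f μ) {C : ℝ} (hfC : ∀ z, |f z| ≤ C * min (‖z‖ ^ 2) 1) :
    Integrable (fun z => f z * J z) μ := by
  refine (hJ.integrable_min_sq_one_mul.const_mul C).mono'
    (hf.mul hJ.measurable.aestronglyMeasurable) (ae_of_all _ fun z => ?_)
  rw [norm_mul, Real.norm_eq_abs, Real.norm_of_nonneg (hJ.nonneg z), ← mul_assoc]
  exact mul_le_mul_of_nonneg_right (hfC z) (hJ.nonneg z)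

theorem integrable_indicator_le_norm [OpensMeasurableSpace E] (hJ : IsLevyKernel μ J) {ε : ℝ}
    (hε : 0 < ε) : Integrable ({z | ε ≤ ‖z‖}.indicator J) μ := by
  have hs : MeasurableSet {z : E | ε ≤ ‖z‖} := measurableSet_le measurable_const measurable_norm
  have hc : 0 < min (ε ^ 2) 1 := by positivity
  refine (hJ.integrable_mul_of_abs_le (C := (min (ε ^ 2) 1)⁻¹)
    (measurable_const.indicator hs (f := 1)).aestronglyMeasurable fun z => ?_).congr
    (ae_of_all _ fun z => ?_)
  · by_cases hz : z ∈ {z : E | ε ≤ ‖z‖}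
    · rw [indicator_of_mem hz, Pi.one_apply, abs_one, inv_mul_eq_div, one_le_div hc]
      exact min_le_min_right _ (pow_le_pow_left₀ hε.le hz 2)
    · rw [indicator_of_notMem hz, abs_zero]
      positivity
  · by_cases hz : ε ≤ ‖z‖ <;> simp [hz]

end IsLevyKernel

end LevyKernel

theorem abs_sub_le_two_mul_of_forall_abs_le {α : Type*} {f : α → ℝ} {M : ℝ}
    (hM : ∀ x, |f x| ≤ M) (x y : α) : |f x - f y| ≤ 2 * M := by
  linarith [abs_sub (f x) (f y), hM x, hM y]

theorem exists_forall_abs_le_of_hasCompactSupport {X : Type*} [TopologicalSpace X] {f : X → ℝ}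
    (hf : Continuous f) (hfs : HasCompactSupport f) : ∃ M, ∀ x, |f x| ≤ M := by
  simpa only [Real.norm_eq_abs] using hf.bounded_above_of_compact_support hfs

section SmoothCompactSupport

variable {E : Type*} [NormedAddCommGroup E] [NormedSpace ℝ E] {v : E → ℝ}

theorem abs_sub_sub_fderiv_le_of_lipschitzWith {K : NNReal} (hv : Differentiable ℝ v)
    (hv' : LipschitzWith K (fderiv ℝ v)) (x y : E) :
    |v y - v x - fderiv ℝ v x (y - x)| ≤ K * ‖y - x‖ ^ 2 := by
  have hball : y ∈ Metric.closedBall x ‖y - x‖ := by simp [dist_eq_norm]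
  have := (convex_closedBall x ‖y - x‖).norm_image_sub_le_of_norm_fderiv_le' (𝕜 := ℝ)
    (φ := fderiv ℝ v x) (C := K * ‖y - x‖) (fun z _ => hv z) (fun z hz => ?_)
    (Metric.mem_closedBall_self (norm_nonneg _)) hball
  · rw [← Real.norm_eq_abs]
    linarith
  · calc ‖fderiv ℝ v z - fderiv ℝ v x‖ ≤ K * ‖z - x‖ := by
          simpa [dist_eq_norm] using hv'.dist_le_mul z x
      _ ≤ K * ‖y - x‖ := by
          gcongr
          simpa [dist_eq_norm] using hz

theorem exists_abs_sub_sub_indicator_fderiv_le (hv : ContDiff ℝ 2 v) (hvs : HasCompactSupport v) :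
    ∃ C, ∀ x z, |v x - v (x - z) - {z | ‖z‖ ≤ 1}.indicator (fderiv ℝ v x) z| ≤
      C * min (‖z‖ ^ 2) 1 := by
  obtain ⟨M, hM⟩ := exists_forall_abs_le_of_hasCompactSupport hv.continuous hvs
  obtain ⟨K, hK⟩ := (hv.fderiv_right (m := 1) le_rfl).lipschitzWith_of_hasCompactSupport
    (hvs.fderiv ℝ) one_ne_zero
  refine ⟨max (K : ℝ) (2 * M), fun x z => ?_⟩
  by_cases hz : z ∈ {z : E | ‖z‖ ≤ 1}
  · rw [indicator_of_mem hz, min_eq_left (pow_le_one₀ (norm_nonneg z) hz)]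
    calc |v x - v (x - z) - fderiv ℝ v x z|
        = |v (x - z) - v x - fderiv ℝ v x (x - z - x)| := by
          rw [← abs_neg]
          simp only [sub_sub_cancel_left, map_neg]
          ring_nf
      _ ≤ K * ‖x - z - x‖ ^ 2 :=
          abs_sub_sub_fderiv_le_of_lipschitzWith (hv.differentiable two_ne_zero) hK x (x - z)
      _ ≤ max (K : ℝ) (2 * M) * ‖z‖ ^ 2 := by
          rw [sub_sub_cancel_left, norm_neg]
          gcongr
          exact le_max_left _ _
  · rw [indicator_of_notMem hz, sub_zero,
      min_eq_right (one_le_pow₀ (le_of_lt (not_le.1 hz))), mul_one]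
    exact (abs_sub_le_two_mul_of_forall_abs_le hM x (x - z)).trans (le_max_right _ _)

theorem exists_sq_sub_le (hv : ContDiff ℝ 1 v) (hvs : HasCompactSupport v) :
    ∃ C, ∀ x z, (v x - v (x - z)) ^ 2 ≤ C * min (‖z‖ ^ 2) 1 := by
  obtain ⟨M, hM⟩ := exists_forall_abs_le_of_hasCompactSupport hv.continuous hvs
  obtain ⟨L, hL⟩ := hv.lipschitzWith_of_hasCompactSupport hvs one_ne_zero
  refine ⟨max ((L : ℝ) ^ 2) ((2 * M) ^ 2), fun x z => ?_⟩
  rw [← sq_abs]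
  by_cases hz : ‖z‖ ≤ 1
  · rw [min_eq_left (pow_le_one₀ (norm_nonneg z) hz)]
    have hLz : |v x - v (x - z)| ≤ L * ‖z‖ := by
      simpa [dist_eq_norm] using hL.dist_le_mul x (x - z)
    calc |v x - v (x - z)| ^ 2 ≤ (L * ‖z‖) ^ 2 := by gcongr
      _ ≤ max ((L : ℝ) ^ 2) ((2 * M) ^ 2) * ‖z‖ ^ 2 := by
          rw [mul_pow]
          gcongr
          exact le_max_left _ _
  · rw [min_eq_right (one_le_pow₀ (le_of_lt (not_le.1 hz))), mul_one]
    calc |v x - v (x - z)| ^ 2 ≤ (2 * M) ^ 2 := by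
          gcongr
          exact abs_sub_le_two_mul_of_forall_abs_le hM x (x - z)
      _ ≤ _ := le_max_right _ _

end SmoothCompactSupport

theorem integral_eq_zero_of_odd {G F : Type*} [MeasurableSpace G] [AddGroup G] [MeasurableNeg G]
    [NormedAddCommGroup F] [NormedSpace ℝ F] {μ : Measure G} [μ.IsNegInvariant] {f : G → F}
    (hf : ∀ x, f (-x) = -f x) : ∫ x, f x ∂μ = 0 := by
  have h := integral_neg_eq_self f μ
  simp only [hf, integral_neg] at h
  rwa [neg_eq_iff_add_eq_zero, ← two_smul ℝ, smul_eq_zero, or_iff_right two_ne_zero] at h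

section Truncation

variable {E : Type*} [NormedAddCommGroup E] [MeasurableSpace E]

noncomputable def truncOp (μ : Measure E) (J v : E → ℝ) (ε : ℝ) (x : E) : ℝ :=
  ∫ z, (v x - v (x - z)) * {z | ε ≤ ‖z‖}.indicator J z ∂μ

theorem setIntegral_le_norm_sub_eq_truncOp [BorelSpace E] {μ : Measure E} [μ.IsAddLeftInvariant]
    [μ.IsNegInvariant] {J v : E → ℝ} (ε : ℝ) (x : E) :
    ∫ y in {y | ε ≤ ‖x - y‖}, (v x - v y) * J (x - y) ∂μ = truncOp μ J v ε x := by
  rw [← integral_indicator (s := {y | ε ≤ ‖x - y‖}) (measurableSet_le measurable_const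
    (by fun_prop)), truncOp, ← integral_sub_left_eq_self _ μ x]
  congr with y
  by_cases h : ε ≤ ‖y‖ <;> simp [h]

variable [OpensMeasurableSpace E]

theorem tendsto_integral_mul_indicator_le_norm {α : Type*} [MeasurableSpace α] {ν : Measure α}
    {f : α → ℝ} {k : E → ℝ} {φ : α → E} (hφ : Measurable φ)
    (hf : Integrable (fun a => f a * k (φ a)) ν) (h0 : ∀ a, φ a = 0 → f a = 0) :
    Tendsto (fun ε => ∫ a, f a * {z | ε ≤ ‖z‖}.indicator k (φ a) ∂ν) (𝓝[>] 0)
      (𝓝 (∫ a, f a * k (φ a) ∂ν)) := by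
  have hind : ∀ ε a, f a * {z | ε ≤ ‖z‖}.indicator k (φ a) =
      {a | ε ≤ ‖φ a‖}.indicator (fun a => f a * k (φ a)) a := by
    intro ε a
    by_cases h : ε ≤ ‖φ a‖ <;> simp [h]
  refine tendsto_integral_filter_of_dominated_convergence (fun a => ‖f a * k (φ a)‖)
    (.of_forall fun ε => ?_) (.of_forall fun ε => ae_of_all _ fun a => ?_) hf.norm
    (ae_of_all _ fun a => ?_)
  · simp_rw [hind]
    exact hf.aestronglyMeasurable.indicator (measurableSet_le measurable_const hφ.norm)
  · rw [hind]
    exact norm_indicator_le_norm_self _ _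
  · by_cases ha : φ a = 0
    · simp [h0 a ha]
    · refine tendsto_const_nhds.congr' ?_
      filter_upwards [Ioo_mem_nhdsGT (norm_pos_iff.2 ha)] with ε hε
      rw [indicator_of_mem (show φ a ∈ {z | ε ≤ ‖z‖} from hε.2.le)]

theorem stronglyMeasurable_truncOp [MeasurableSub₂ E] {μ : Measure E} [SFinite μ] {J v : E → ℝ}
    (hJm : Measurable J) (hvm : Measurable v) (ε : ℝ) :
    StronglyMeasurable (truncOp μ J v ε) :=
  StronglyMeasurable.integral_prod_right' (f := fun p : E × E =>
    (v p.1 - v (p.1 - p.2)) * {z | ε ≤ ‖z‖}.indicator J p.2) <| Measurable.stronglyMeasurable <|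
    ((hvm.comp measurable_fst).sub (hvm.comp (measurable_fst.sub measurable_snd))).mul
      ((hJm.indicator (measurableSet_le measurable_const measurable_norm)).comp measurable_snd)

end Truncation

section PrincipalValue

variable {E : Type*} [NormedAddCommGroup E] [NormedSpace ℝ E] [MeasurableSpace E]

/-- The first-order term subtracted in the integrand integrates to zero against the even kernel on
every region `{ε ≤ ‖z‖}`, so this is the limit of `truncOp μ J v ε x` as `ε → 0`. -/
noncomputable def levyOp (μ : Measure E) (J v : E → ℝ) (x : E) : ℝ :=
  ∫ z, (v x - v (x - z) - {z | ‖z‖ ≤ 1}.indicator (fderiv ℝ v x) z) * J z ∂μ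

variable [BorelSpace E] {μ : Measure E} {J v : E → ℝ}

theorem truncOp_eq_integral_sub_indicator_fderiv [μ.IsNegInvariant] (hJ : IsLevyKernel μ J)
    (hvm : Measurable v) {M : ℝ} (hM : ∀ y, |v y| ≤ M) {ε : ℝ} (hε : 0 < ε) (x : E) :
    truncOp μ J v ε x = ∫ z, (v x - v (x - z) - {z | ‖z‖ ≤ 1}.indicator (fderiv ℝ v x) z) *
      {z | ε ≤ ‖z‖}.indicator J z ∂μ := by
  set W := {z : E | ε ≤ ‖z‖}.indicator J
  set ℓ := {z : E | ‖z‖ ≤ 1}.indicator (fderiv ℝ v x)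
  have hW : Integrable W μ := hJ.integrable_indicator_le_norm hε
  have hdiff : Integrable (fun z => (v x - v (x - z)) * W z) μ :=
    hW.bdd_mul (by fun_prop : Measurable fun z => v x - v (x - z)).aestronglyMeasurable
      (ae_of_all _ fun z => abs_sub_le_two_mul_of_forall_abs_le hM _ _)
  have hlin : Integrable (fun z => ℓ z * W z) μ := by
    refine hW.bdd_mul (c := ‖fderiv ℝ v x‖) ((fderiv ℝ v x).continuous.measurable.indicator
      (measurableSet_le measurable_norm measurable_const)).aestronglyMeasurable
      (ae_of_all _ fun z => ?_)
    by_cases hz : z ∈ {z : E | ‖z‖ ≤ 1}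
    · simpa [ℓ, indicator_of_mem hz] using (fderiv ℝ v x).le_opNorm_of_le hz
    · simp [ℓ, indicator_of_notMem hz]
  have hodd : ∫ z, ℓ z * W z ∂μ = 0 := integral_eq_zero_of_odd fun z => by
    by_cases h1 : ‖z‖ ≤ 1 <;> by_cases h2 : ε ≤ ‖z‖ <;> simp [ℓ, W, h1, h2, hJ.even]
  calc truncOp μ J v ε x = ∫ z, (v x - v (x - z)) * W z ∂μ - ∫ z, ℓ z * W z ∂μ := by
        rw [hodd, sub_zero]
        rfl
    _ = _ := by
        rw [← integral_sub hdiff hlin]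
        congr with z
        ring

theorem tendsto_truncOp_levyOp [μ.IsNegInvariant] (hJ : IsLevyKernel μ J) (hv : ContDiff ℝ 2 v)
    (hvs : HasCompactSupport v) (x : E) :
    Tendsto (fun ε => truncOp μ J v ε x) (𝓝[>] 0) (𝓝 (levyOp μ J v x)) := by
  obtain ⟨C, hC⟩ := exists_abs_sub_sub_indicator_fderiv_le hv hvs
  obtain ⟨M, hM⟩ := exists_forall_abs_le_of_hasCompactSupport hv.continuous hvs
  have hint : Integrable
      (fun z => (v x - v (x - z) - {z | ‖z‖ ≤ 1}.indicator (fderiv ℝ v x) z) * J z) μ :=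
    hJ.integrable_mul_of_abs_le ((((hv.continuous.comp (continuous_const.sub
      continuous_id)).measurable.const_sub (v x)).sub
        ((fderiv ℝ v x).continuous.measurable.indicator
          (measurableSet_le measurable_norm measurable_const))).aestronglyMeasurable) (hC x)
  refine (tendsto_integral_mul_indicator_le_norm measurable_id hint fun z hz => ?_).congr' ?_
  · simp [show z = 0 from hz]
  · filter_upwards [self_mem_nhdsWithin] with ε hε
    exact (truncOp_eq_integral_sub_indicator_fderiv hJ hv.continuous.measurable hM hε x).symm

theorem exists_abs_truncOp_le [μ.IsNegInvariant] (hJ : IsLevyKernel μ J) (hv : ContDiff ℝ 2 v)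
    (hvs : HasCompactSupport v) : ∃ C, ∀ ε > 0, ∀ x, |truncOp μ J v ε x| ≤ C := by
  obtain ⟨C, hC⟩ := exists_abs_sub_sub_indicator_fderiv_le hv hvs
  obtain ⟨M, hM⟩ := exists_forall_abs_le_of_hasCompactSupport hv.continuous hvs
  refine ⟨∫ z, C * (min (‖z‖ ^ 2) 1 * J z) ∂μ, fun ε hε x => ?_⟩
  have hW0 : ∀ z, 0 ≤ {z : E | ε ≤ ‖z‖}.indicator J z := indicator_nonneg fun z _ => hJ.nonneg z
  rw [truncOp_eq_integral_sub_indicator_fderiv hJ hv.continuous.measurable hM hε x,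
    ← Real.norm_eq_abs]
  refine norm_integral_le_of_norm_le (hJ.integrable_min_sq_one_mul.const_mul C)
    (ae_of_all _ fun z => ?_)
  rw [norm_mul, Real.norm_eq_abs, Real.norm_of_nonneg (hW0 z), ← mul_assoc]
  exact mul_le_mul (hC x z) (indicator_le_self' (fun z _ => hJ.nonneg z) z) (hW0 z)
    ((abs_nonneg _).trans (hC x z))

theorem tendsto_integral_mul_truncOp [MeasurableSub₂ E] [μ.IsNegInvariant] [SFinite μ]
    (hJ : IsLevyKernel μ J) (hv : ContDiff ℝ 2 v) (hvs : HasCompactSupport v) {u : E → ℝ}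
    (hu : Integrable u μ) :
    Tendsto (fun ε => ∫ x, u x * truncOp μ J v ε x ∂μ) (𝓝[>] 0)
      (𝓝 (∫ x, u x * levyOp μ J v x ∂μ)) := by
  obtain ⟨C, hC⟩ := exists_abs_truncOp_le hJ hv hvs
  refine tendsto_integral_filter_of_dominated_convergence (fun x => ‖u x‖ * C)
    (.of_forall fun ε => hu.aestronglyMeasurable.mul
      (stronglyMeasurable_truncOp hJ.measurable hv.continuous.measurable ε).aestronglyMeasurable)
    ?_ (hu.norm.mul_const C)
    (ae_of_all _ fun x => (tendsto_truncOp_levyOp hJ hv hvs x).const_mul _)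
  filter_upwards [self_mem_nhdsWithin] with ε hε
  refine ae_of_all _ fun x => ?_
  rw [norm_mul, Real.norm_eq_abs (truncOp μ J v ε x)]
  exact mul_le_mul_of_nonneg_left (hC ε hε x) (norm_nonneg _)

end PrincipalValue

section Symmetrization

variable {G : Type*} [AddCommGroup G] [MeasurableSpace G] [MeasurableAdd₂ G] [MeasurableNeg G]
  {μ : Measure G} [μ.IsAddLeftInvariant] [μ.IsNegInvariant] [SFinite μ]

theorem integral_prod_sub_mul_sub_mul_eq_two_mul {W u v : G → ℝ} (hW : Integrable W μ)
    (hWeven : ∀ z, W (-z) = W z) (hu : Integrable u μ) (hvm : Measurable v) {M : ℝ}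
    (hM : ∀ x, |v x| ≤ M) :
    ∫ p, (u p.1 - u p.2) * (v p.1 - v p.2) * W (p.1 - p.2) ∂μ.prod μ =
      2 * ∫ x, u x * ∫ z, (v x - v (x - z)) * W z ∂μ ∂μ := by
  set A : G × G → ℝ := fun p => (v p.1 - v p.2) * (u p.1 * W (p.1 - p.2))
  have huW : Integrable (fun p : G × G => u p.1 * W (p.1 - p.2)) (μ.prod μ) := by
    -- the shear `(x, y) ↦ (x, y - x)` turns `u x * W (y - x)` into `u ⊗ W`
    have hshear := measurePreserving_prod_sub μ μ
    refine ((hshear.integrable_comp (hu.mul_prod hW).aestronglyMeasurable).2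
      (hu.mul_prod hW)).congr (ae_of_all _ fun p => ?_)
    simp [← hWeven (p.1 - p.2)]
  have hA : Integrable A (μ.prod μ) := huW.bdd_mul
    ((hvm.comp measurable_fst).sub (hvm.comp measurable_snd)).aestronglyMeasurable
    (ae_of_all _ fun p => abs_sub_le_two_mul_of_forall_abs_le hM _ _)
  have hsplit : ∀ p : G × G,
      (u p.1 - u p.2) * (v p.1 - v p.2) * W (p.1 - p.2) = A p + A p.swap := by
    intro p
    simp only [A, Prod.fst_swap, Prod.snd_swap, ← hWeven (p.1 - p.2), neg_sub]
    ring
  have hinner : ∀ x, ∫ y, A (x, y) ∂μ = u x * ∫ z, (v x - v (x - z)) * W z ∂μ := by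
    intro x
    rw [← integral_const_mul, ← integral_sub_left_eq_self _ μ x]
    congr with z
    simp only [A, _root_.sub_sub_cancel]
    ring
  have hAswap : Integrable (fun p => A p.swap) (μ.prod μ) := hA.swap
  calc _ = ∫ p, (A p + A p.swap) ∂μ.prod μ := integral_congr_ae (ae_of_all _ hsplit)
    _ = 2 * ∫ p, A p ∂μ.prod μ := by
        rw [integral_add hA hAswap, integral_prod_swap A]
        ring
    _ = _ := by simp_rw [integral_prod A hA, hinner]

end Symmetrization

section FormIntegrability

variable {G : Type*} [AddCommGroup G] [MeasurableSpace G] [MeasurableSub₂ G] {μ : Measure G}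
  [SFinite μ] {J : G → ℝ}

theorem integrable_prod_sq_sub_mul_of_lintegral_lt_top (hJm : Measurable J) (hJ0 : ∀ z, 0 ≤ J z)
    {u : G → ℝ} (hum : Measurable u)
    (hu : ∫⁻ x, ∫⁻ y, ENNReal.ofReal ((u x - u y) ^ 2 * J (x - y)) ∂μ ∂μ < ⊤) :
    Integrable (fun p : G × G => (u p.1 - u p.2) ^ 2 * J (p.1 - p.2)) (μ.prod μ) := by
  have hm : Measurable fun p : G × G => (u p.1 - u p.2) ^ 2 * J (p.1 - p.2) :=
    (((hum.comp measurable_fst).sub (hum.comp measurable_snd)).pow_const 2).mul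
      (hJm.comp (measurable_fst.sub measurable_snd))
  refine ⟨hm.aestronglyMeasurable, (hasFiniteIntegral_iff_ofReal (ae_of_all _ fun p =>
    mul_nonneg (sq_nonneg _) (hJ0 _))).2 ?_⟩
  rwa [lintegral_prod _ (hm.ennreal_ofReal).aemeasurable]

theorem integrable_prod_sub_mul_sub_mul_of_lintegral_lt_top (hJm : Measurable J)
    (hJ0 : ∀ z, 0 ≤ J z) {u v : G → ℝ} (hum : Measurable u) (hvm : Measurable v)
    (hu : ∫⁻ x, ∫⁻ y, ENNReal.ofReal ((u x - u y) ^ 2 * J (x - y)) ∂μ ∂μ < ⊤)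
    (hv : ∫⁻ x, ∫⁻ y, ENNReal.ofReal ((v x - v y) ^ 2 * J (x - y)) ∂μ ∂μ < ⊤) :
    Integrable (fun p : G × G => (u p.1 - u p.2) * (v p.1 - v p.2) * J (p.1 - p.2))
      (μ.prod μ) := by
  refine ((integrable_prod_sq_sub_mul_of_lintegral_lt_top hJm hJ0 hum hu).add
    (integrable_prod_sq_sub_mul_of_lintegral_lt_top hJm hJ0 hvm hv)).mono'
    ((((hum.comp measurable_fst).sub (hum.comp measurable_snd)).mul
      ((hvm.comp measurable_fst).sub (hvm.comp measurable_snd))).mul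
        (hJm.comp (measurable_fst.sub measurable_snd))).aestronglyMeasurable
    (ae_of_all _ fun p => ?_)
  set a := u p.1 - u p.2
  set b := v p.1 - v p.2
  rw [Pi.add_apply, norm_mul, norm_mul, Real.norm_of_nonneg (hJ0 _), ← add_mul,
    Real.norm_eq_abs, Real.norm_eq_abs]
  refine mul_le_mul_of_nonneg_right ?_ (hJ0 _)
  nlinarith [sq_abs a, sq_abs b, sq_nonneg (|a| - |b|), abs_nonneg a, abs_nonneg b]

end FormIntegrability

section SmoothEnergy

variable {E : Type*} [NormedAddCommGroup E] [NormedSpace ℝ E] [MeasurableSpace E] [BorelSpace E]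
  [MeasurableSub₂ E] {μ : Measure E} [μ.IsAddLeftInvariant] [μ.IsNegInvariant] [SFinite μ]
  [IsFiniteMeasureOnCompacts μ] {J v : E → ℝ}

theorem IsLevyKernel.lintegral_lintegral_sq_sub_mul_lt_top (hJ : IsLevyKernel μ J)
    (hv : ContDiff ℝ 1 v) (hvs : HasCompactSupport v) :
    ∫⁻ x, ∫⁻ y, ENNReal.ofReal ((v x - v y) ^ 2 * J (x - y)) ∂μ ∂μ < ⊤ := by
  obtain ⟨C, hC⟩ := exists_sq_sub_le hv hvs
  set K := tsupport v
  have hK : MeasurableSet K := (isClosed_tsupport v).measurableSet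
  set g : E → ℝ := fun z => C * (min (‖z‖ ^ 2) 1 * J z)
  have hpt : ∀ x z, ENNReal.ofReal ((v x - v (x - z)) ^ 2 * J z) ≤
      ENNReal.ofReal (g z) * (K.indicator 1 x + K.indicator 1 (x - z)) := by
    intro x z
    by_cases hx : x ∈ K ∨ x - z ∈ K
    · have hone : (1 : ℝ≥0∞) ≤ K.indicator 1 x + K.indicator 1 (x - z) := by
        rcases hx with hx | hx <;> simp [indicator_of_mem hx]
      refine le_trans (ENNReal.ofReal_le_ofReal ?_) (le_mul_of_one_le_right' hone)
      rw [show g z = C * min (‖z‖ ^ 2) 1 * J z from (mul_assoc _ _ _).symm]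
      exact mul_le_mul_of_nonneg_right (hC x z) (hJ.nonneg z)
    · push Not at hx
      simp [image_eq_zero_of_notMem_tsupport hx.1, image_eq_zero_of_notMem_tsupport hx.2]
  have hm : Measurable (Function.uncurry fun x z : E =>
      ENNReal.ofReal ((v x - v (x - z)) ^ 2 * J z)) :=
    ENNReal.measurable_ofReal.comp (((hv.continuous.measurable.comp measurable_fst).sub
      (hv.continuous.measurable.comp (measurable_fst.sub measurable_snd))).pow_const 2 |>.mul
        (hJ.measurable.comp measurable_snd))
  calc ∫⁻ x, ∫⁻ y, ENNReal.ofReal ((v x - v y) ^ 2 * J (x - y)) ∂μ ∂μ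
      = ∫⁻ x, ∫⁻ z, ENNReal.ofReal ((v x - v (x - z)) ^ 2 * J z) ∂μ ∂μ := by
        congr with x
        rw [← lintegral_sub_left_eq_self _ x]
        simp only [_root_.sub_sub_cancel]
    _ = ∫⁻ z, ∫⁻ x, ENNReal.ofReal ((v x - v (x - z)) ^ 2 * J z) ∂μ ∂μ :=
        lintegral_lintegral_swap hm.aemeasurable
    _ ≤ ∫⁻ z, ENNReal.ofReal (g z) * (2 * μ K) ∂μ := by
        refine lintegral_mono fun z => (lintegral_mono fun x => hpt x z).trans_eq ?_
        rw [lintegral_const_mul' _ _ ENNReal.ofReal_ne_top,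
          lintegral_add_left (measurable_one.indicator hK), lintegral_indicator_one hK,
          lintegral_sub_right_eq_self (K.indicator 1) z, lintegral_indicator_one hK, two_mul]
    _ = (∫⁻ z, ENNReal.ofReal (g z) ∂μ) * (2 * μ K) := lintegral_mul_const' _ _ (by
        have := hvs.measure_lt_top (μ := μ); finiteness)
    _ < ⊤ := ENNReal.mul_lt_top (hJ.integrable_min_sq_one_mul.const_mul C).lintegral_lt_top
        (by have := hvs.measure_lt_top (μ := μ); finiteness)

end SmoothEnergy

theorem Iop_eq_levyOp {N : ℕ} {J v : EuclideanSpace ℝ (Fin N) → ℝ} (hJ : IsLevyKernel volume J)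
    (hv : ContDiff ℝ 2 v) (hvs : HasCompactSupport v) : Iop N J v = levyOp volume J v :=
  funext fun x => ((tendsto_truncOp_levyOp hJ hv hvs x).congr fun ε =>
    (setIntegral_le_norm_sub_eq_truncOp ε x).symm).limUnder_eq

theorem Jbil_eq_integral_Iop_general
    (N : ℕ) (J : EuclideanSpace ℝ (Fin N) → ℝ)
    (hJmeas : Measurable J) (hJnonneg : ∀ z, 0 ≤ J z)
    (hJeven : ∀ z, J (-z) = J z)
    (hJ1a : ∫⁻ z in {z | 1 ≤ ‖z‖}, ENNReal.ofReal (J z) < ⊤)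
    (hJ1b : ∫⁻ z in {z | ‖z‖ ≤ 1}, ENNReal.ofReal (‖z‖ ^ 2 * J z) < ⊤)
    (Ω : Set (EuclideanSpace ℝ (Fin N)))
    (hΩb : Bornology.IsBounded Ω)
    (v : EuclideanSpace ℝ (Fin N) → ℝ)
    (hv : ContDiff ℝ 2 v) (hvs : HasCompactSupport v)
    (u : EuclideanSpace ℝ (Fin N) → ℝ)
    (hu : u ∈ calD N J Ω) (huL2 : MemLp u 2 volume) :
    Jbil N J u v = ∫ x, u x * Iop N J v x := by
  obtain ⟨hum, hQu, hsupp⟩ := hu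
  have hJ : IsLevyKernel volume J := .of_lintegral_lt_top hJmeas hJnonneg hJeven hJ1b hJ1a
  have hvm := hv.continuous.measurable
  obtain ⟨M, hM⟩ := exists_forall_abs_le_of_hasCompactSupport hv.continuous hvs
  have hui : Integrable u := memLp_one_iff_integrable.1 <|
    huL2.mono_exponent_of_measure_support_ne_top hsupp hΩb.measure_lt_top.ne (by norm_num)
  have hF := integrable_prod_sub_mul_sub_mul_of_lintegral_lt_top hJmeas hJnonneg hum hvm
    (ENNReal.lt_top_of_mul_ne_top_right hQu.ne (by norm_num))
    (hJ.lintegral_lintegral_sq_sub_mul_lt_top (hv.of_le one_le_two) hvs)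
  have hsym : ∀ᶠ ε in 𝓝[>] 0, ∫ p, (u p.1 - u p.2) * (v p.1 - v p.2) *
      {z | ε ≤ ‖z‖}.indicator J (p.1 - p.2) ∂volume.prod volume =
        2 * ∫ x, u x * truncOp volume J v ε x := by
    filter_upwards [self_mem_nhdsWithin] with ε hε
    exact integral_prod_sub_mul_sub_mul_eq_two_mul (hJ.integrable_indicator_le_norm hε)
      (fun z => by simp [indicator_apply, hJ.even]) hui hvm hM
  have hlim := (tendsto_integral_mul_indicator_le_norm (k := J)
    (φ := fun p : _ × _ => p.1 - p.2) (f := fun p : _ × _ => (u p.1 - u p.2) * (v p.1 - v p.2))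
    (measurable_fst.sub measurable_snd) hF fun p hp => by rw [sub_eq_zero.1 hp]; ring).congr' hsym
  rw [Jbil, integral_integral hF, Iop_eq_levyOp hJ hv hvs,
    tendsto_nhds_unique hlim ((tendsto_integral_mul_truncOp hJ hv hvs hui).const_mul 2)]
  ring

/-- `𝒥(u,v) = ∫ u · Iv` for `v ∈ C²_c(ℝᴺ)` and `u ∈ 𝒟(Ω) ∩ L²(Ω)`. -/
theorem Jbil_eq_integral_Iop
    (N : ℕ) (J : EuclideanSpace ℝ (Fin N) → ℝ)
    (hJmeas : Measurable J) (hJnonneg : ∀ z, 0 ≤ J z)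
    (hJeven : ∀ z, J (-z) = J z)
    (hJ1a : ∫⁻ z in {z | 1 ≤ ‖z‖}, ENNReal.ofReal (J z) < ⊤)
    (hJ1b : ∫⁻ z in {z | ‖z‖ ≤ 1}, ENNReal.ofReal (‖z‖ ^ 2 * J z) < ⊤)
    (hJinf : ∫⁻ z, ENNReal.ofReal (J z) = ⊤)
    (Ω : Set (EuclideanSpace ℝ (Fin N)))
    (hΩo : IsOpen Ω) (hΩb : Bornology.IsBounded Ω)
    (v : EuclideanSpace ℝ (Fin N) → ℝ)
    (hv : ContDiff ℝ 2 v) (hvs : HasCompactSupport v)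
    (u : EuclideanSpace ℝ (Fin N) → ℝ)
    (hu : u ∈ calD N J Ω) (huL2 : MemLp u 2 volume) :
    Jbil N J u v = ∫ x, u x * Iop N J v x :=
  Jbil_eq_integral_Iop_general N J hJmeas hJnonneg hJeven hJ1a hJ1b Ω hΩb v hv hvs u hu huL2
end

section
/- Let U′ ⊂ ℝᴺ be open, J even nonnegative with ∫_{ℝᴺ\B_r(0)} J(z) dz < ∞ for every r > 0, and let v, φ ∈ L²(ℝᴺ) satisfy ρ(v,U′) < ∞ and ρ(φ,U′) < ∞ where ρ(w,U′) = ∬_{U′×U′} (w(x)−w(y))² J(x−y) dx dy. Suppose φ ≡ 0 on ℝᴺ \ U for some U ⊂ U′ with dist(U, ℝᴺ \ U′) > 0. Then ∬_{ℝᴺ×ℝᴺ} |v(x)−v(y)| |φ(x)−φ(y)| J(x−y) dx dy < ∞. -/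
open MeasureTheory ENNReal Set

/-!
Pointwise, `|a| |b| ≤ a² + b²` bounds the integrand by the two energy densities
`(w x - w y)² J (x - y)`. If `φ x ≠ φ y`, then either `x, y ∈ U'`, where the energies `ρ(v, U')`,
`ρ(φ, U')` are finite, or one point lies in `U` and the other outside `U'`, so `‖x - y‖ ≥ r`.
On `{‖x - y‖ ≥ r}` the kernel is integrable, and `(a - b)² ≤ 2a² + 2b²` together with
translation invariance bounds the energy there by `4 ‖w‖₂² ∫_{‖z‖ ≥ r} J`.
-/

theorem ENNReal.ofReal_sub_sq_le (a b : ℝ) :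
    ENNReal.ofReal ((a - b) ^ 2) ≤ 2 * ENNReal.ofReal (a ^ 2) + 2 * ENNReal.ofReal (b ^ 2) := by
  calc ENNReal.ofReal ((a - b) ^ 2) ≤ ENNReal.ofReal (2 * a ^ 2 + 2 * b ^ 2) :=
        ENNReal.ofReal_le_ofReal (by nlinarith [sq_nonneg (a + b)])
    _ = 2 * ENNReal.ofReal (a ^ 2) + 2 * ENNReal.ofReal (b ^ 2) := by
        rw [ENNReal.ofReal_add (by positivity) (by positivity), ENNReal.ofReal_mul zero_le_two,
          ENNReal.ofReal_mul zero_le_two, ENNReal.ofReal_ofNat]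

theorem ENNReal.ofReal_abs_mul_abs_le (a b : ℝ) :
    ENNReal.ofReal (|a| * |b|) ≤ ENNReal.ofReal (a ^ 2) + ENNReal.ofReal (b ^ 2) := by
  rw [← ENNReal.ofReal_add (sq_nonneg a) (sq_nonneg b)]
  refine ENNReal.ofReal_le_ofReal ?_
  nlinarith [sq_abs a, sq_abs b, sq_nonneg (|a| - |b|)]

noncomputable def energyDensity {G : Type*} [Sub G] (w : G → ℝ) (k : G → ℝ≥0∞) (p : G × G) :
    ℝ≥0∞ :=
  ENNReal.ofReal ((w p.1 - w p.2) ^ 2) * k (p.1 - p.2)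

section Kernel

variable {G : Type*} [AddCommGroup G] [MeasurableSpace G] [MeasurableAdd₂ G] [MeasurableNeg G]

theorem lintegral_prod_mul_sub_fst (μ : Measure G) [SFinite μ] [μ.IsAddLeftInvariant]
    [μ.IsNegInvariant] {f k : G → ℝ≥0∞} (hf : Measurable f) (hk : Measurable k) :
    ∫⁻ p, f p.1 * k (p.1 - p.2) ∂μ.prod μ = (∫⁻ x, f x ∂μ) * ∫⁻ z, k z ∂μ := by
  rw [lintegral_prod _ (by fun_prop)]
  have inner (x : G) : ∫⁻ y, f x * k (x - y) ∂μ = f x * ∫⁻ z, k z ∂μ := by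
    rw [lintegral_const_mul _ (by fun_prop), lintegral_sub_left_eq_self]
  simp only [inner]
  exact lintegral_mul_const _ hf

theorem lintegral_prod_mul_sub_snd (μ : Measure G) [SFinite μ] [μ.IsAddLeftInvariant]
    {f k : G → ℝ≥0∞} (hf : Measurable f) (hk : Measurable k) :
    ∫⁻ p, f p.2 * k (p.1 - p.2) ∂μ.prod μ = (∫⁻ x, f x ∂μ) * ∫⁻ z, k z ∂μ := by
  rw [lintegral_prod_symm _ (by fun_prop)]
  have inner (y : G) : ∫⁻ x, f y * k (x - y) ∂μ = f y * ∫⁻ z, k z ∂μ := by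
    rw [lintegral_const_mul _ (by fun_prop), lintegral_sub_right_eq_self]
  simp only [inner]
  exact lintegral_mul_const _ hf

theorem measurable_energyDensity_s7 {w : G → ℝ} {k : G → ℝ≥0∞} (hw : Measurable w)
    (hk : Measurable k) : Measurable (energyDensity w k) := by
  unfold energyDensity
  fun_prop

theorem lintegral_energyDensity_le (μ : Measure G) [SFinite μ] [μ.IsAddLeftInvariant]
    [μ.IsNegInvariant] {w : G → ℝ} {k : G → ℝ≥0∞} (hw : Measurable w) (hk : Measurable k) :
    ∫⁻ p, energyDensity w k p ∂μ.prod μ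
      ≤ 4 * (∫⁻ x, ENNReal.ofReal (w x ^ 2) ∂μ) * ∫⁻ z, k z ∂μ := by
  have hw2 : Measurable fun x => 2 * ENNReal.ofReal (w x ^ 2) := by fun_prop
  calc ∫⁻ p, energyDensity w k p ∂μ.prod μ
      ≤ ∫⁻ p, 2 * ENNReal.ofReal (w p.1 ^ 2) * k (p.1 - p.2)
          + 2 * ENNReal.ofReal (w p.2 ^ 2) * k (p.1 - p.2) ∂μ.prod μ :=
        lintegral_mono fun p => by
          rw [energyDensity, ← add_mul]
          gcongr
          exact ENNReal.ofReal_sub_sq_le _ _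
    _ = 4 * (∫⁻ x, ENNReal.ofReal (w x ^ 2) ∂μ) * ∫⁻ z, k z ∂μ := by
        rw [lintegral_add_left (by fun_prop), lintegral_prod_mul_sub_fst μ hw2 hk,
          lintegral_prod_mul_sub_snd μ hw2 hk, lintegral_const_mul _ (by fun_prop)]
        ring

theorem lintegral_energyDensity_lt_top (μ : Measure G) [SFinite μ] [μ.IsAddLeftInvariant]
    [μ.IsNegInvariant] {w : G → ℝ} {k : G → ℝ≥0∞} (hw : Measurable w) (hwL2 : MemLp w 2 μ)
    (hk : Measurable k) (hK : ∫⁻ z, k z ∂μ < ⊤) :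
    ∫⁻ p, energyDensity w k p ∂μ.prod μ < ⊤ :=
  (lintegral_energyDensity_le μ hw hk).trans_lt
    (mul_lt_top (mul_lt_top ofNat_lt_top hwL2.integrable_sq.lintegral_lt_top) hK)

end Kernel

section Support

variable {E : Type*} [SeminormedAddCommGroup E] {U U' : Set E} {r : ℝ}

theorem mem_prod_or_le_norm_sub_of_ne {M : Type*} [Zero M] {φ : E → M} (hU : U ⊆ U')
    (hφ0 : ∀ x ∉ U, φ x = 0) (hdist : ∀ x ∈ U, ∀ y ∉ U', r ≤ dist x y) {x y : E}
    (hxy : φ x ≠ φ y) : (x, y) ∈ U' ×ˢ U' ∨ r ≤ ‖x - y‖ := by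
  have mem_of_ne_zero : ∀ z, φ z ≠ 0 → z ∈ U := fun z hz => by_contra fun h => hz (hφ0 z h)
  by_cases hx : x ∈ U'
  · by_cases hy : y ∈ U'
    · exact .inl ⟨hx, hy⟩
    · have hφx : φ x ≠ 0 := fun h => hxy (h.trans (hφ0 y fun h' => hy (hU h')).symm)
      exact .inr (dist_eq_norm_sub x y ▸ hdist x (mem_of_ne_zero x hφx) y hy)
  · have hφy : φ y ≠ 0 := fun h => hxy ((hφ0 x fun h' => hx (hU h')).trans h.symm)
    exact .inr (dist_eq_norm_sub' y x ▸ hdist y (mem_of_ne_zero y hφy) x hx)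

theorem ofReal_abs_mul_abs_mul_le_energyDensity {v φ : E → ℝ} (k : E → ℝ≥0∞) (hU : U ⊆ U')
    (hφ0 : ∀ x ∉ U, φ x = 0) (hdist : ∀ x ∈ U, ∀ y ∉ U', r ≤ dist x y) (p : E × E) :
    ENNReal.ofReal (|v p.1 - v p.2| * |φ p.1 - φ p.2|) * k (p.1 - p.2)
      ≤ (U' ×ˢ U').indicator (energyDensity v k + energyDensity φ k) p
        + (energyDensity v ({z | r ≤ ‖z‖}.indicator k) p
          + energyDensity φ ({z | r ≤ ‖z‖}.indicator k) p) := by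
  have amgm : ENNReal.ofReal (|v p.1 - v p.2| * |φ p.1 - φ p.2|) * k (p.1 - p.2)
      ≤ energyDensity v k p + energyDensity φ k p := by
    rw [energyDensity, energyDensity, ← add_mul]
    gcongr
    exact ENNReal.ofReal_abs_mul_abs_le _ _
  by_cases hφ : φ p.1 = φ p.2
  · simp [hφ]
  rcases mem_prod_or_le_norm_sub_of_ne hU hφ0 hdist hφ with hp | hp
  · rw [indicator_of_mem hp]
    exact amgm.trans le_self_add
  · simp only [energyDensity, indicator_of_mem (show p.1 - p.2 ∈ {z | r ≤ ‖z‖} from hp)]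
    exact amgm.trans le_add_self

end Support

theorem lintegral_lintegral_ofReal_abs_mul_abs_mul_lt_top {E : Type*} [NormedAddCommGroup E]
    [MeasurableSpace E] [BorelSpace E] [SecondCountableTopology E] (μ : Measure E) [SFinite μ]
    [μ.IsAddLeftInvariant] [μ.IsNegInvariant] {k : E → ℝ≥0∞} (hk : Measurable k) {r : ℝ}
    (hkr : ∫⁻ z in {z | r ≤ ‖z‖}, k z ∂μ < ⊤) {v φ : E → ℝ} (hvm : Measurable v)
    (hφm : Measurable φ) (hvL2 : MemLp v 2 μ) (hφL2 : MemLp φ 2 μ) {U U' : Set E}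
    (hρv : ∫⁻ x in U', ∫⁻ y in U', energyDensity v k (x, y) ∂μ ∂μ < ⊤)
    (hρφ : ∫⁻ x in U', ∫⁻ y in U', energyDensity φ k (x, y) ∂μ ∂μ < ⊤)
    (hU : U ⊆ U') (hφ0 : ∀ x ∉ U, φ x = 0) (hdist : ∀ x ∈ U, ∀ y ∉ U', r ≤ dist x y) :
    ∫⁻ x, ∫⁻ y, ENNReal.ofReal (|v x - v y| * |φ x - φ y|) * k (x - y) ∂μ ∂μ < ⊤ := by
  have hS : MeasurableSet {z : E | r ≤ ‖z‖} := measurableSet_le measurable_const measurable_norm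
  have hkS := hk.indicator hS
  have hKS : ∫⁻ z, {z : E | r ≤ ‖z‖}.indicator k z ∂μ < ⊤ := by rwa [lintegral_indicator hS]
  have hev := measurable_energyDensity_s7 hvm hk
  have heφ := measurable_energyDensity_s7 hφm hk
  have near : ∫⁻ p, (U' ×ˢ U').indicator (energyDensity v k + energyDensity φ k) p ∂μ.prod μ
      < ⊤ := by
    refine (lintegral_indicator_le _ _).trans_lt ?_
    simp only [Pi.add_apply]
    rw [lintegral_add_left hev, setLIntegral_prod _ hev.aemeasurable,
      setLIntegral_prod _ heφ.aemeasurable]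
    exact add_lt_top.2 ⟨hρv, hρφ⟩
  calc ∫⁻ x, ∫⁻ y, ENNReal.ofReal (|v x - v y| * |φ x - φ y|) * k (x - y) ∂μ ∂μ
      = ∫⁻ p, ENNReal.ofReal (|v p.1 - v p.2| * |φ p.1 - φ p.2|) * k (p.1 - p.2) ∂μ.prod μ :=
        (lintegral_prod (fun p => ENNReal.ofReal (|v p.1 - v p.2| * |φ p.1 - φ p.2|) * k (p.1 - p.2))
          (by fun_prop)).symm
    _ ≤ ∫⁻ p, (U' ×ˢ U').indicator (energyDensity v k + energyDensity φ k) p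
          + (energyDensity v ({z | r ≤ ‖z‖}.indicator k) p
            + energyDensity φ ({z | r ≤ ‖z‖}.indicator k) p) ∂μ.prod μ :=
        lintegral_mono (ofReal_abs_mul_abs_mul_le_energyDensity k hU hφ0 hdist)
    _ < ⊤ := by
        rw [lintegral_add_right _ ?_, lintegral_add_left (measurable_energyDensity_s7 hvm hkS)]
        exact add_lt_top.2 ⟨near, add_lt_top.2 ⟨lintegral_energyDensity_lt_top μ hvm hvL2 hkS hKS,
          lintegral_energyDensity_lt_top μ hφm hφL2 hkS hKS⟩⟩
        exact (measurable_energyDensity_s7 hvm hkS).add (measurable_energyDensity_s7 hφm hkS)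

theorem bilinear_form_well_defined_general
    (N : ℕ) (U' : Set (EuclideanSpace ℝ (Fin N)))
    (J : EuclideanSpace ℝ (Fin N) → ℝ)
    (hJmeas : Measurable J)
    (hJr : ∀ r > (0 : ℝ), ∫⁻ z in {z | r ≤ ‖z‖}, ENNReal.ofReal (J z) < ⊤)
    (v φ : EuclideanSpace ℝ (Fin N) → ℝ)
    (hvm : Measurable v) (hφm : Measurable φ)
    (hvL2 : MemLp v 2 volume) (hφL2 : MemLp φ 2 volume)
    (hρv : ∫⁻ x in U', ∫⁻ y in U', ENNReal.ofReal ((v x - v y) ^ 2 * J (x - y)) < ⊤)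
    (hρφ : ∫⁻ x in U', ∫⁻ y in U', ENNReal.ofReal ((φ x - φ y) ^ 2 * J (x - y)) < ⊤)
    (U : Set (EuclideanSpace ℝ (Fin N))) (hU : U ⊆ U')
    (hφ0 : ∀ x ∉ U, φ x = 0)
    (r : ℝ) (hr : 0 < r)
    (hdist : ∀ x ∈ U, ∀ y ∉ U', r ≤ dist x y) :
    ∫⁻ x, ∫⁻ y, ENNReal.ofReal (|v x - v y| * |φ x - φ y| * J (x - y)) < ⊤ := by
  simp only [ENNReal.ofReal_mul (sq_nonneg _)] at hρv hρφ
  simp only [ENNReal.ofReal_mul (mul_nonneg (abs_nonneg _) (abs_nonneg _))]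
  exact lintegral_lintegral_ofReal_abs_mul_abs_mul_lt_top volume hJmeas.ennreal_ofReal (hJr r hr)
    hvm hφm hvL2 hφL2 hρv hρφ hU hφ0 hdist

/-- Well-definedness of the bilinear form `𝒥(v,φ)` for `v, φ ∈ ℋ(U′)` with `φ`
supported in a set `U` at positive distance from `ℝᴺ \ U′`. -/
theorem bilinear_form_well_defined
    (N : ℕ) (U' : Set (EuclideanSpace ℝ (Fin N))) (hU' : IsOpen U')
    (J : EuclideanSpace ℝ (Fin N) → ℝ)
    (hJmeas : Measurable J) (hJnonneg : ∀ z, 0 ≤ J z)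
    (hJeven : ∀ z, J (-z) = J z)
    (hJr : ∀ r > (0 : ℝ), ∫⁻ z in {z | r ≤ ‖z‖}, ENNReal.ofReal (J z) < ⊤)
    (v φ : EuclideanSpace ℝ (Fin N) → ℝ)
    (hvm : Measurable v) (hφm : Measurable φ)
    (hvL2 : MemLp v 2 volume) (hφL2 : MemLp φ 2 volume)
    (hρv : ∫⁻ x in U', ∫⁻ y in U', ENNReal.ofReal ((v x - v y) ^ 2 * J (x - y)) < ⊤)
    (hρφ : ∫⁻ x in U', ∫⁻ y in U', ENNReal.ofReal ((φ x - φ y) ^ 2 * J (x - y)) < ⊤)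
    (U : Set (EuclideanSpace ℝ (Fin N))) (hU : U ⊆ U')
    (hφ0 : ∀ x ∉ U, φ x = 0)
    (r : ℝ) (hr : 0 < r)
    (hdist : ∀ x ∈ U, ∀ y ∉ U', r ≤ dist x y) :
    ∫⁻ x, ∫⁻ y, ENNReal.ofReal (|v x - v y| * |φ x - φ y| * J (x - y)) < ⊤ :=
  bilinear_form_well_defined_general N U' J hJmeas hJr v φ hvm hφm hvL2 hφL2 hρv hρφ U hU hφ0 r hr
    hdist
end
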